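/- Let G be a connected simple graph and {a,b} an edge of G that is not a bridge, i.e., the graph G − {a,b} obtained by removing the edge is still connected. Then the effective resistance of this edge is strictly less than 1: r_G(a,b) = M[a,a] − 2·M[a,b] + M[b,b] < 1 for any Moore–Penrose pseudoinverse M of L_G. -/

import Mathlib

/-!
Write `x = e_a - e_b`. Deleting the edge `ab` splits the Laplacian as `L_G = L' + x xᵀ`, where
`L'` is the Laplacian of `G - ab`. As `G - ab` is connected, `ker L'` consists of the constant
vectors, which are orthogonal to `x`; so `x = L' y` for some `y`, and `c := x ⬝ y = yᵀ L' y ≥ 0`.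
Then `L_G y = (1 + c) x`. For a pseudoinverse `M`, `L_G u = x` gives `xᵀ M x = uᵀ L_G M L_G u = uᵀ x`;
taking `u = y / (1 + c)` yields `xᵀ M x = c / (1 + c) < 1`. Finally `M` is symmetric, being the
unique pseudoinverse of the symmetric `L_G`, so `xᵀ M x = M a a - 2 M a b + M b b`.
-/

open Matrix

/-- `M` is a Moore–Penrose pseudoinverse of `L`. -/
def IsMoorePenrose {n : Type*} [Fintype n] (L M : Matrix n n ℝ) : Prop :=
  L * M * L = L ∧ M * L * M = M ∧ (L * M)ᵀ = L * M ∧ (M * L)ᵀ = M * L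

instance deleteEdgeAdjDecidable {V : Type*} [DecidableEq V]
    (G : SimpleGraph V) [DecidableRel G.Adj] (a b : V) :
    DecidableRel (G.deleteEdges {s(a, b)}).Adj := fun x y =>
  decidable_of_iff (G.Adj x y ∧ ¬s(x, y) = s(a, b)) (by simp)

namespace IsMoorePenrose

variable {n : Type*} [Fintype n] {L M N : Matrix n n ℝ}

theorem transpose (hM : IsMoorePenrose L M) : IsMoorePenrose Lᵀ Mᵀ := by
  obtain ⟨h₁, h₂, h₃, h₄⟩ := hM
  refine ⟨?_, ?_, ?_, ?_⟩
  · rw [← transpose_mul, ← transpose_mul, ← mul_assoc, h₁]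
  · rw [← transpose_mul, ← transpose_mul, ← mul_assoc, h₂]
  · rw [← transpose_mul, h₄, h₄]
  · rw [← transpose_mul, h₃, h₃]

theorem unique (hM : IsMoorePenrose L M) (hN : IsMoorePenrose L N) : M = N := by
  obtain ⟨hM₁, hM₂, hM₃, hM₄⟩ := hM
  obtain ⟨hN₁, hN₂, hN₃, hN₄⟩ := hN
  have hLM : L * M = L * N := by
    calc L * M = (L * N * L * M)ᵀ := by rw [hN₁, hM₃]
      _ = (L * M)ᵀ * (L * N)ᵀ := by simp only [transpose_mul, mul_assoc]
      _ = L * N := by rw [hM₃, hN₃, ← mul_assoc, hM₁]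
  have hML : M * L = N * L := by
    calc M * L = (M * L * N * L)ᵀ := by
          rw [mul_assoc (M * L), mul_assoc M, ← mul_assoc L, hN₁, hM₄]
      _ = (N * L)ᵀ * (M * L)ᵀ := by simp only [transpose_mul, mul_assoc]
      _ = N * L := by rw [hM₄, hN₄, mul_assoc, ← mul_assoc L, hM₁]
  calc M = N * L * M := by rw [← hML, hM₂]
    _ = N := by rw [mul_assoc, hLM, ← mul_assoc, hN₂]

theorem isSymm (hL : L.IsSymm) (hM : IsMoorePenrose L M) : M.IsSymm :=
  (hL.eq ▸ hM.transpose).unique hM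

theorem dotProduct_mulVec_of_mulVec_eq (hL : L.IsSymm) (hM : IsMoorePenrose L M)
    {u x : n → ℝ} (hu : L *ᵥ u = x) : x ⬝ᵥ (M *ᵥ x) = u ⬝ᵥ x := by
  subst hu
  rw [dotProduct_comm, dotProduct_mulVec, ← mulVec_transpose, hL.eq, mulVec_mulVec,
    mulVec_mulVec, hM.1, dotProduct_comm]

theorem dotProduct_mulVec_add_vecMulVec {x y : n → ℝ} (hL : L.IsSymm) (hy : L *ᵥ y = x)
    (hM : IsMoorePenrose (L + vecMulVec x x) M) (hc : 1 + x ⬝ᵥ y ≠ 0) :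
    x ⬝ᵥ (M *ᵥ x) = (x ⬝ᵥ y) / (1 + x ⬝ᵥ y) := by
  have hsymm : (L + vecMulVec x x).IsSymm := hL.add (by simp [IsSymm, transpose_vecMulVec])
  have hu : (L + vecMulVec x x) *ᵥ ((1 + x ⬝ᵥ y)⁻¹ • y) = x := by
    rw [mulVec_smul, add_mulVec, hy, vecMulVec_mulVec, op_smul_eq_smul,
      show x + (x ⬝ᵥ y) • x = (1 + x ⬝ᵥ y) • x by module, smul_smul, inv_mul_cancel₀ hc,
      one_smul]
  rw [hM.dotProduct_mulVec_of_mulVec_eq hsymm hu, smul_dotProduct, dotProduct_comm, smul_eq_mul,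
    inv_mul_eq_div]

end IsMoorePenrose

theorem Matrix.IsSymm.single_sub_single_dotProduct_mulVec {n R : Type*} [Fintype n]
    [DecidableEq n] [CommRing R] {M : Matrix n n R} (hM : M.IsSymm) (a b : n) :
    (Pi.single a 1 - Pi.single b 1) ⬝ᵥ (M *ᵥ (Pi.single a 1 - Pi.single b 1)) =
      M a a - 2 * M a b + M b b := by
  simp only [mulVec_sub, sub_dotProduct, dotProduct_sub, mulVec_single_one, single_one_dotProduct,
    col_apply, hM.apply a b]
  ring

theorem Matrix.IsHermitian.exists_mulVec_eq {n 𝕜 : Type*} [Fintype n] [RCLike 𝕜]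
    {A : Matrix n n 𝕜} (hA : A.IsHermitian) {v : n → 𝕜}
    (hv : ∀ z, A *ᵥ z = 0 → v ⬝ᵥ star z = 0) : ∃ y, A *ᵥ y = v := by
  classical
  have hrange : LinearMap.range (toEuclideanLin A) = (LinearMap.ker (toEuclideanLin A))ᗮ := by
    rw [← (isSymmetric_toEuclideanLin_iff.mpr hA).orthogonal_range,
      Submodule.orthogonal_orthogonal]
  have hmem : WithLp.toLp 2 v ∈ (LinearMap.ker (toEuclideanLin A))ᗮ :=
    fun z hz ↦ hv z.ofLp (congrArg WithLp.ofLp hz)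
  obtain ⟨y, hy⟩ := hrange ▸ hmem
  exact ⟨y.ofLp, congrArg WithLp.ofLp hy⟩

namespace SimpleGraph

variable {V R : Type*}

theorem deleteEdges_sup_edge {G : SimpleGraph V} {a b : V} (hab : G.Adj a b) :
    G.deleteEdges {s(a, b)} ⊔ edge a b = G := by
  ext v w
  simp only [sup_adj, deleteEdges_adj, Set.mem_singleton_iff, edge_adj]
  grind [adj_symm, Sym2.eq_iff, Adj.ne]

theorem degree_sup_of_disjoint [Fintype V] {G H : SimpleGraph V} [DecidableRel G.Adj]
    [DecidableRel H.Adj] [DecidableRel (G ⊔ H).Adj] (h : Disjoint G H) (v : V) :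
    (G ⊔ H).degree v = G.degree v + H.degree v := by
  rw [← card_neighborFinset_eq_degree, neighborFinset_sup_of_disjoint v h,
    Finset.card_disjUnion, card_neighborFinset_eq_degree, card_neighborFinset_eq_degree]

theorem adjMatrix_sup_of_disjoint [AddMonoidWithOne R] {G H : SimpleGraph V}
    [DecidableRel G.Adj] [DecidableRel H.Adj] [DecidableRel (G ⊔ H).Adj] (h : Disjoint G H) :
    (G ⊔ H).adjMatrix R = G.adjMatrix R + H.adjMatrix R := by
  ext i j
  by_cases hG : G.Adj i j
  · simp [hG, disjoint_left.mp h i j hG]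
  · simp [hG]

theorem lapMatrix_sup_of_disjoint [Fintype V] [DecidableEq V] [AddCommGroupWithOne R]
    {G H : SimpleGraph V} [DecidableRel G.Adj] [DecidableRel H.Adj] [DecidableRel (G ⊔ H).Adj]
    (h : Disjoint G H) : (G ⊔ H).lapMatrix R = G.lapMatrix R + H.lapMatrix R := by
  have hdeg : (G ⊔ H).degMatrix R = G.degMatrix R + H.degMatrix R := by
    simp [degMatrix, degree_sup_of_disjoint h]
  rw [lapMatrix, lapMatrix, lapMatrix, hdeg, adjMatrix_sup_of_disjoint h]
  abel

theorem degree_edge [Fintype V] [DecidableEq V] {s t : V} (h : s ≠ t) (v : V) :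
    (edge s t).degree v = if v = s ∨ v = t then 1 else 0 := by
  rw [← Nat.cast_id ((edge s t).degree v), degree_eq_sum_if_adj]
  by_cases hs : v = s <;> by_cases ht : v = t <;> subst_vars <;>
    simp_all [edge_adj, Finset.filter_and, Finset.filter_eq, Finset.filter_ne,
      Finset.singleton_inter_of_mem, eq_comm]

theorem lapMatrix_edge [Fintype V] [DecidableEq V] [Ring R] {s t : V} (h : s ≠ t) :
    (edge s t).lapMatrix R =
      vecMulVec (Pi.single s 1 - Pi.single t 1) (Pi.single s 1 - Pi.single t 1) := by
  ext i j
  simp only [lapMatrix, degMatrix, Matrix.sub_apply, diagonal_apply, degree_edge h,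
    adjMatrix_apply, edge_adj, vecMulVec_apply, Pi.sub_apply, Pi.single_apply]
  by_cases hs : i = s <;> by_cases ht : j = t <;> by_cases hij : i = j <;> subst_vars <;>
    split_ifs <;> simp_all

theorem lapMatrix_eq_lapMatrix_deleteEdges_add [Fintype V] [DecidableEq V] [Ring R]
    {G : SimpleGraph V} [DecidableRel G.Adj] {a b : V} (hab : G.Adj a b) :
    G.lapMatrix R = (G.deleteEdges {s(a, b)}).lapMatrix R +
      vecMulVec (Pi.single a 1 - Pi.single b 1) (Pi.single a 1 - Pi.single b 1) := by
  have hdisj : Disjoint (G.deleteEdges {s(a, b)}) (edge a b) := (disjoint_edge _).mpr (by simp)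
  rw [← lapMatrix_edge hab.ne, ← lapMatrix_sup_of_disjoint hdisj]
  congr!
  exact (deleteEdges_sup_edge hab).symm

theorem Connected.exists_lapMatrix_mulVec_eq [Fintype V] [DecidableEq V] {G : SimpleGraph V}
    [DecidableRel G.Adj] (hG : G.Connected) (a b : V) :
    ∃ y, G.lapMatrix ℝ *ᵥ y = Pi.single a 1 - Pi.single b 1 :=
  (isHermitian_lapMatrix ℝ G).exists_mulVec_eq fun z hz ↦ by
    have hzab := (lapMatrix_mulVec_eq_zero_iff_forall_reachable G).mp hz a b (hG.preconnected a b)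
    simp [sub_dotProduct, hzab]

end SimpleGraph

theorem non_bridge_effective_resistance_lt_one_general {V : Type*} [Fintype V] [DecidableEq V]
    (G : SimpleGraph V) [DecidableRel G.Adj]
    (a b : V) (hab : G.Adj a b) (hnb : (G.deleteEdges {s(a, b)}).Connected)
    (M : Matrix V V ℝ) (hM : IsMoorePenrose (G.lapMatrix ℝ) M) :
    M a a - 2 * M a b + M b b < 1 := by
  obtain ⟨y, hy⟩ := hnb.exists_lapMatrix_mulVec_eq a b
  have hc : 0 ≤ (Pi.single a 1 - Pi.single b 1) ⬝ᵥ y := by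
    simpa [← hy, dotProduct_comm] using (G.deleteEdges {s(a, b)}).posSemidef_lapMatrix ℝ
      |>.dotProduct_mulVec_nonneg y
  rw [← (hM.isSymm (G.isSymm_lapMatrix ℝ)).single_sub_single_dotProduct_mulVec a b]
  rw [SimpleGraph.lapMatrix_eq_lapMatrix_deleteEdges_add hab] at hM
  rw [hM.dotProduct_mulVec_add_vecMulVec (SimpleGraph.isSymm_lapMatrix ℝ _) hy (by positivity),
    div_lt_one (by positivity)]
  linarith

theorem non_bridge_effective_resistance_lt_one {V : Type*} [Fintype V] [DecidableEq V]
    (G : SimpleGraph V) [DecidableRel G.Adj] (hG : G.Connected)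
    (a b : V) (hab : G.Adj a b) (hnb : (G.deleteEdges {s(a, b)}).Connected)
    (M : Matrix V V ℝ) (hM : IsMoorePenrose (G.lapMatrix ℝ) M) :
    M a a - 2 * M a b + M b b < 1 :=
  non_bridge_effective_resistance_lt_one_general G a b hab hnb M hM
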